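/- arXiv:1404.7155 — 2 statements merged into one kernel-verified Lean document; each statement's English description precedes it below -/
import Mathlib

section
/- Let f be a polynomial of degree p with Bernstein coefficient vector c on the interval [a,b] and coefficient vector c̃ on the interval [ã, b̃]. Then c̃ = A c, where A is the (p+1)×(p+1) matrix with entries A_{jk} = ∑_{i=max(1, j+k-p-1)}^{min(j,k)} B_i^{j-1}(b̃) B_{k-i+1}^{p-j+1}(ã), where the Bernstein polynomials B_i^q on the right-hand side are defined over the interval [a,b]. -/
/-
Both t - a and b - t are affine combinations of t - a' and b' - t, with coefficients
a' - a, b' - a and b - a', b - b'. Expanding the two powers in a Bernstein polynomial on [a, b] by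
the binomial theorem and regrouping by the total power of t - a' (a trinomial rearrangement of
binomial coefficients) writes it in the Bernstein basis on [a', b'], with exactly the coefficients
A_{jk}. The coefficients of f can then be compared because the Bernstein basis on [a', b'] is
linearly independent: at t = (a' + b' y) / (1 + y) it becomes a multiple of the monomials y^j.
-/

/-- Bernstein basis polynomial of degree `p` on the interval `[a,b]`, 1-based index `i`. -/
noncomputable def bernAB (a b : ℝ) (p i : ℕ) (t : ℝ) : ℝ :=
  (p.choose (i - 1)) * (b - t) ^ (p - (i - 1)) * (t - a) ^ (i - 1) / (b - a) ^ p

open Finset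

open Nat in
theorem Nat.add_choose_mul_choose_mul_choose_comm (m n u v : ℕ) :
    (m + n + (u + v)).choose (m + n) * (m + n).choose m * (u + v).choose u =
      (m + u + (n + v)).choose (m + u) * (m + u).choose m * (n + v).choose n := by
  have multinomial (m n u v : ℕ) :
      (m + n + (u + v)).choose (m + n) * (m + n).choose m * (u + v).choose u
        * (m ! * n ! * (u ! * v !)) = (m + n + (u + v))! := by
    rw [← add_choose_mul_factorial_mul_factorial (m + n) (u + v), add_comm (m + n) (u + v),
      Nat.choose_symm_add, ← add_choose_mul_factorial_mul_factorial m n,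
      ← add_choose_mul_factorial_mul_factorial u v, Nat.choose_symm_add, Nat.choose_symm_add]
    ring
  apply Nat.eq_of_mul_eq_mul_right (by positivity : 0 < m ! * n ! * (u ! * v !))
  rw [multinomial, show m ! * n ! * (u ! * v !) = m ! * u ! * (n ! * v !) by ring, multinomial]
  congr 1
  ring

theorem Finset.sum_range_sum_range_eq_sum_range_sum_Icc {M : Type*} [AddCommMonoid M]
    {p k : ℕ} (hk : k ≤ p) (g : ℕ → ℕ → M) :
    ∑ m ∈ range (k + 1), ∑ n ∈ range (p - k + 1), g (m + n) (m + 1) =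
      ∑ j ∈ range (p + 1), ∑ i ∈ Icc (max 1 (j + 1 + (k + 1) - (p + 1))) (min (j + 1) (k + 1)),
        g j i := by
  rw [sum_sigma', sum_sigma']
  refine sum_nbij' (fun x => ⟨x.1 + x.2, x.1 + 1⟩) (fun x => ⟨x.2 - 1, x.1 + 1 - x.2⟩)
    ?_ ?_ ?_ ?_ fun _ _ => rfl <;>
  · rintro ⟨_, _⟩ hx
    simp only [mem_sigma, mem_range, mem_Icc] at hx ⊢
    first | omega | (congr 1 <;> omega)

section HomBernstein

variable {R : Type*} [CommRing R]

def homBernstein (p ν : ℕ) (x y : R) : R :=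
  p.choose ν * y ^ (p - ν) * x ^ ν

theorem homBernstein_mul_mul {p ν : ℕ} (hν : ν ≤ p) (c x y : R) :
    homBernstein p ν (c * x) (c * y) = c ^ p * homBernstein p ν x y := by
  rw [homBernstein, homBernstein, mul_pow, mul_pow, ← Nat.sub_add_cancel hν, pow_add,
    Nat.add_sub_cancel]
  ring

theorem homBernstein_add_add_eq_sum {p k : ℕ} (hk : k ≤ p) (x₀ y₀ x₁ y₁ σ τ : R) :
    homBernstein p k (σ * x₁ + τ * x₀) (σ * y₁ + τ * y₀) =
      ∑ j ∈ range (p + 1), ∑ i ∈ Icc (max 1 (j + 1 + (k + 1) - (p + 1))) (min (j + 1) (k + 1)),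
        homBernstein j (i - 1) x₁ y₁ * homBernstein (p - j) (k + 1 - i) x₀ y₀ *
          homBernstein p j σ τ := by
  rw [← sum_range_sum_range_eq_sum_range_sum_Icc hk, homBernstein, add_pow, add_pow, mul_sum]
  refine sum_congr rfl fun m hm => ?_
  rw [mul_sum, sum_mul]
  refine sum_congr rfl fun n hn => ?_
  obtain ⟨u, rfl⟩ := Nat.exists_eq_add_of_le (Nat.lt_succ_iff.mp (mem_range.mp hm))
  obtain ⟨v, rfl⟩ : ∃ v, p = m + u + (n + v) := ⟨p - (m + u) - n, by grind⟩
  have hchoose := congrArg (Nat.cast : ℕ → R) (Nat.add_choose_mul_choose_mul_choose_comm m n u v)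
  rw [show m + n + (u + v) = m + u + (n + v) by ring] at hchoose
  push_cast at hchoose
  simp only [homBernstein, Nat.add_sub_cancel_left, Nat.add_sub_cancel,
    show m + u + 1 - (m + 1) = u by omega, show m + u + (n + v) - (m + n) = u + v by omega]
  linear_combination (-σ ^ (m + n) * τ ^ (u + v) * x₁ ^ m * y₁ ^ n * x₀ ^ u * y₀ ^ v) * hchoose

end HomBernstein

theorem bernAB_mul_pow {a b : ℝ} (hab : a ≠ b) (q i : ℕ) (t : ℝ) :
    bernAB a b q i t * (b - a) ^ q = homBernstein q (i - 1) (t - a) (b - t) := by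
  rw [bernAB, div_mul_cancel₀ _ (pow_ne_zero _ (sub_ne_zero.mpr hab.symm)), homBernstein]

theorem homBernstein_eq_bernAB_succ_mul_pow {a b : ℝ} (hab : a ≠ b) (q ν : ℕ) (t : ℝ) :
    homBernstein q ν (t - a) (b - t) = bernAB a b q (ν + 1) t * (b - a) ^ q := by
  rw [bernAB_mul_pow hab, Nat.add_sub_cancel]

theorem bernAB_coeffs_injective {a b : ℝ} (hab : a ≠ b) {p : ℕ} {d e : Fin (p + 1) → ℝ}
    (h : ∀ t, ∑ j, d j * bernAB a b p (j + 1) t = ∑ j, e j * bernAB a b p (j + 1) t) :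
    d = e := by
  suffices hv : (fun j : Fin (p + 1) => (d j - e j) * p.choose j) = 0 by
    funext j
    have hchoose : (p.choose j : ℝ) ≠ 0 := Nat.cast_ne_zero.mpr (Nat.choose_pos j.is_le).ne'
    exact sub_eq_zero.mp ((mul_eq_zero.mp (congrFun hv j)).resolve_right hchoose)
  refine Matrix.eq_zero_of_forall_index_sum_mul_pow_eq_zero (f := fun j => (j : ℝ) + 1)
    (fun i j hij => Fin.ext (by simpa using hij)) fun j₀ => ?_
  set y : ℝ := (j₀ : ℝ) + 1
  have hy : 1 + y ≠ 0 := by positivity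
  set c := (b - a) / (1 + y)
  have hc : c ≠ 0 := div_ne_zero (sub_ne_zero.mpr hab.symm) hy
  set t := (a + b * y) / (1 + y)
  have hta : t - a = c * y := by simp only [t, c]; field_simp; ring
  have hbt : b - t = c * 1 := by simp only [t, c]; field_simp; ring
  have hmonomial (j : Fin (p + 1)) :
      bernAB a b p (j + 1) t * (b - a) ^ p = c ^ p * (p.choose j * y ^ (j : ℕ)) := by
    rw [← homBernstein_eq_bernAB_succ_mul_pow hab, hta, hbt, homBernstein_mul_mul j.is_le,
      homBernstein]
    simp
  have hsum := congrArg (· * (b - a) ^ p) (sub_eq_zero.mpr (h t))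
  simp only [← sum_sub_distrib, ← sub_mul, sum_mul, mul_assoc, hmonomial, zero_mul] at hsum
  refine (mul_eq_zero.mp ?_).resolve_left (pow_ne_zero p hc)
  rw [mul_sum, ← hsum]
  exact sum_congr rfl fun j _ => by ring

/-- The entry `A_{j+1,k+1}`: here `j`, `k` are 0-based but the summation index `i` is 1-based. -/
noncomputable def bernChangeCoeff (a b a' b' : ℝ) (p j k : ℕ) : ℝ :=
  ∑ i ∈ Icc (max 1 (j + 1 + (k + 1) - (p + 1))) (min (j + 1) (k + 1)),
    bernAB a b j i b' * bernAB a b (p - j) (k + 1 - i + 1) a'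

theorem bernAB_eq_sum_bernChangeCoeff_mul {a b a' b' : ℝ} (hab : a ≠ b) (hab' : a' ≠ b')
    {p k : ℕ} (hk : k ≤ p) (t : ℝ) :
    bernAB a b p (k + 1) t =
      ∑ j : Fin (p + 1), bernChangeCoeff a b a' b' p j k * bernAB a' b' p (j + 1) t := by
  have hscale : (b - a) ^ p * (b' - a') ^ p ≠ 0 := by
    have := sub_ne_zero.mpr hab.symm
    have := sub_ne_zero.mpr hab'.symm
    positivity
  refine mul_left_cancel₀ hscale ?_
  calc (b - a) ^ p * (b' - a') ^ p * bernAB a b p (k + 1) t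
      = (b' - a') ^ p * homBernstein p k (t - a) (b - t) := by
        rw [homBernstein_eq_bernAB_succ_mul_pow hab]; ring
    _ = homBernstein p k ((t - a') * (b' - a) + (b' - t) * (a' - a))
          ((t - a') * (b - b') + (b' - t) * (b - a')) := by
        rw [← homBernstein_mul_mul hk]; congr 1 <;> ring
    _ = ∑ j ∈ range (p + 1), ∑ i ∈ Icc (max 1 (j + 1 + (k + 1) - (p + 1))) (min (j + 1) (k + 1)),
          homBernstein j (i - 1) (b' - a) (b - b') *
            homBernstein (p - j) (k + 1 - i) (a' - a) (b - a') *
              homBernstein p j (t - a') (b' - t) := homBernstein_add_add_eq_sum hk _ _ _ _ _ _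
    _ = _ := by
        rw [mul_sum, Fin.sum_univ_eq_sum_range (fun j => (b - a) ^ p * (b' - a') ^ p *
          (bernChangeCoeff a b a' b' p j k * bernAB a' b' p (j + 1) t))]
        refine sum_congr rfl fun j hj => ?_
        rw [bernChangeCoeff, sum_mul, mul_sum]
        refine sum_congr rfl fun i _ => ?_
        rw [← bernAB_mul_pow hab, homBernstein_eq_bernAB_succ_mul_pow hab,
          homBernstein_eq_bernAB_succ_mul_pow hab',
          ← pow_mul_pow_sub (b - a) (mem_range_succ_iff.mp hj)]
        ring

/-- Change of interval for Bernstein coefficients: if a degree-`p` polynomial has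
Bernstein coefficients `c` on `[a,b]` and `c'` on `[a',b']`, then `c' = A c`, where
`A_{jk} = ∑_{i = max(1, j+k-p-1)}^{min(j,k)} B_i^{j-1}(b') B_{k-i+1}^{p-j+1}(a')`
with the Bernstein polynomials on the right defined over `[a,b]`
(all indices 1-based; here `j k : Fin (p+1)` correspond to 1-based indices `j+1, k+1`). -/
theorem bern_change_of_interval (p : ℕ) (a b a' b' : ℝ) (hab : a < b) (hab2 : a' < b')
    (c c' : Fin (p + 1) → ℝ)
    (h : ∀ t : ℝ, ∑ i : Fin (p + 1), c i * bernAB a b p ((i : ℕ) + 1) t =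
        ∑ i : Fin (p + 1), c' i * bernAB a' b' p ((i : ℕ) + 1) t) :
    ∀ j : Fin (p + 1), c' j =
      ∑ k : Fin (p + 1),
        (∑ i ∈ Finset.Icc (max 1 (((j : ℕ) + 1) + ((k : ℕ) + 1) - (p + 1)))
              (min ((j : ℕ) + 1) ((k : ℕ) + 1)),
          bernAB a b (j : ℕ) i b' * bernAB a b (p - (j : ℕ)) ((k : ℕ) + 1 - i + 1) a') * c k := by
  change ∀ j : Fin (p + 1), c' j = ∑ k : Fin (p + 1), bernChangeCoeff a b a' b' p j k * c k
  refine congrFun (bernAB_coeffs_injective hab2.ne fun t => ?_)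
  simp only [← h t, bernAB_eq_sum_bernChangeCoeff_mul hab.ne hab2.ne (Fin.is_le _) t, mul_sum,
    sum_mul]
  rw [sum_comm]
  exact sum_congr rfl fun j _ => sum_congr rfl fun k _ => by ring
end

section
/- Suppose for each basis function index A, the element weights ω_A^e over elements e in the support E_A of N_A sum to one: ∑_{e ∈ E_A} ω_A^e = 1. Then the Bézier projection operator Π_B is a projector onto the spline space T, i.e., Π_B(T) = T for all T ∈ T. Conversely, if Π_B(T) = T for all T ∈ T then the weights must sum to one for each A. -/
/-! Local reproduction makes the Bézier coefficient of the spline `∑_B c_B N_B` equal to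
`(∑_{e ∈ E_A} ω_A^e) c_A`, so in the basis `N` the operator `Π_B` acts on splines as the diagonal
scaling by the weight sums; by linear independence this is the identity exactly when every weight
sum is one. -/

open Finset

theorem sum_mul_eq_sum_mul_of_forall_eq {α R : Type*} [NonUnitalNonAssocSemiring R]
    {s : Finset α} {ω x : α → R} {a : R} (hx : ∀ e ∈ s, x e = a) :
    ∑ e ∈ s, ω e * x e = (∑ e ∈ s, ω e) * a := by
  rw [sum_mul]
  exact sum_congr rfl fun e he => by rw [hx e he]

theorem LinearIndependent.forall_sum_mul_smul_eq_iff {ι R V : Type*} [Fintype ι] [CommSemiring R]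
    [AddCommMonoid V] [Module R V] {N : ι → V} (hN : LinearIndependent R N) (w : ι → R) :
    (∀ c : ι → R, ∑ A, (w A * c A) • N A = ∑ A, c A • N A) ↔ ∀ A, w A = 1 := by
  refine ⟨fun h A => ?_, fun h c => by simp only [h, one_mul]⟩
  simpa using Fintype.linearIndependent_iffₛ.mp hN _ _ (h 1) A

/-- Bézier projection `Π_B(f) = ∑_A [∑_{e ∈ E_A} ω_A^e λ_A^e(f)] N_A` is a projector onto
the spline space (i.e. it reproduces every spline `T = ∑_B c_B N_B`) if and only if, for
every basis function index `A`, the weights over the elements in its support sum to one.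
Here `lam e f A = λ_A^e(f)` are the element-level coefficients, assumed to reproduce
spline coefficients locally, and the `N_A` are linearly independent. -/
theorem bezier_projection_projector_iff_weights_sum_one
    {V : Type*} [AddCommGroup V] [Module ℝ V] {ι El : Type*} [Fintype ι]
    (N : ι → V) (hN : LinearIndependent ℝ N)
    (EA : ι → Finset El) (ω : ι → El → ℝ) (lam : El → V → ι → ℝ)
    (hrepr : ∀ (c : ι → ℝ) (A : ι), ∀ e ∈ EA A, lam e (∑ B, c B • N B) A = c A) :
    (∀ A, ∑ e ∈ EA A, ω A e = 1) ↔
      ∀ c : ι → ℝ,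
        (∑ A, (∑ e ∈ EA A, ω A e * lam e (∑ B, c B • N B) A) • N A) = ∑ B, c B • N B := by
  have hcoeff : ∀ (c : ι → ℝ) (A : ι),
      ∑ e ∈ EA A, ω A e * lam e (∑ B, c B • N B) A = (∑ e ∈ EA A, ω A e) * c A :=
    fun c A => sum_mul_eq_sum_mul_of_forall_eq (hrepr c A)
  simp only [hcoeff]
  exact (hN.forall_sum_mul_smul_eq_iff _).symm
end
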